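/- For a Riemannian 3-manifold M isometrically immersed as a hypersurface in Euclidean 4-space, the invariant δ_M(p) = τ(p) − inf K(p) (scalar curvature minus infimum of sectional curvature at p) satisfies δ_M ≤ (9/4) H², where H² is the squared mean curvature. -/
import Mathlib


open scoped Matrix

/-- Sectional curvature, via the Gauss equation, of the plane spanned by an
orthonormal pair `X, Y` of tangent vectors for a hypersurface of `𝔼⁴` with
shape operator `A` at the point: `K(X∧Y) = ⟨AX,X⟩⟨AY,Y⟩ − ⟨AX,Y⟩²`. -/
noncomputable def sectCurv (A : Matrix (Fin 3) (Fin 3) ℝ) (X Y : Fin 3 → ℝ) : ℝ :=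
  (A.mulVec X ⬝ᵥ X) * (A.mulVec Y ⬝ᵥ Y) - (A.mulVec X ⬝ᵥ Y) ^ 2

/-- For a symmetric 3×3 matrix, the second elementary symmetric function of the
eigenvalues (sum of principal 2×2 minors) equals `((tr M)² − tr(M²))/2`. -/
lemma sigma2_eq (M : Matrix (Fin 3) (Fin 3) ℝ) (h : M.IsSymm) :
    M 0 0 * M 1 1 + M 0 0 * M 2 2 + M 1 1 * M 2 2
      - (M 0 1) ^ 2 - (M 0 2) ^ 2 - (M 1 2) ^ 2
      = (M.trace ^ 2 - (M * M).trace) / 2 := by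
  have h10 := h.apply 0 1
  have h20 := h.apply 0 2
  have h21 := h.apply 1 2
  simp only [Matrix.trace_fin_three, Matrix.mul_apply, Fin.sum_univ_three]
  rw [h10, h20, h21]; ring

/-- Chen's fundamental inequality for a Riemannian 3-manifold isometrically
immersed as a hypersurface in Euclidean 4-space, expressed at a point via the
(symmetric) shape operator `A` and the Gauss equation: the invariant
`δ_M = τ − inf K` satisfies `δ_M ≤ (9/4) H²`, where
`τ = Σ_{i<j} K(e_i ∧ e_j)` for an orthonormal basis, `inf K` is the infimum of
the sectional curvatures of all 2-planes, and `H = (1/3) trace A` is the mean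
curvature. -/
theorem chen_inequality_hypersurface_E4 (A : Matrix (Fin 3) (Fin 3) ℝ)
    (hA : A.IsSymm) :
    (sectCurv A (Pi.single 0 1) (Pi.single 1 1) +
      sectCurv A (Pi.single 0 1) (Pi.single 2 1) +
      sectCurv A (Pi.single 1 1) (Pi.single 2 1)) -
      sInf {k : ℝ | ∃ X Y : Fin 3 → ℝ,
        X ⬝ᵥ X = 1 ∧ Y ⬝ᵥ Y = 1 ∧ X ⬝ᵥ Y = 0 ∧ k = sectCurv A X Y}
      ≤ (9 / 4) * (A.trace / 3) ^ 2 := by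
  have ha10 := hA.apply 0 1
  have ha20 := hA.apply 0 2
  have ha21 := hA.apply 1 2
  -- the explicit τ expression equals ((tr A)² − tr(A²))/2
  have hτ : sectCurv A (Pi.single 0 1) (Pi.single 1 1) +
      sectCurv A (Pi.single 0 1) (Pi.single 2 1) +
      sectCurv A (Pi.single 1 1) (Pi.single 2 1)
      = (A.trace ^ 2 - (A * A).trace) / 2 := by
    rw [← sigma2_eq A hA]
    simp only [sectCurv, Matrix.mulVec, dotProduct, Fin.sum_univ_three]
    simp [Pi.single_apply, Fin.sum_univ_three]
    rw [ha10, ha20, ha21]; ring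
  -- nonemptiness of the set of sectional curvatures
  have hne : {k : ℝ | ∃ X Y : Fin 3 → ℝ,
      X ⬝ᵥ X = 1 ∧ Y ⬝ᵥ Y = 1 ∧ X ⬝ᵥ Y = 0 ∧ k = sectCurv A X Y}.Nonempty := by
    refine ⟨sectCurv A (Pi.single 0 1) (Pi.single 1 1),
      Pi.single 0 1, Pi.single 1 1, ?_, ?_, ?_, rfl⟩ <;>
      simp [dotProduct, Fin.sum_univ_three, Pi.single_apply]
  -- the key lower bound for every sectional curvature
  have hlb : ∀ k ∈ {k : ℝ | ∃ X Y : Fin 3 → ℝ,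
      X ⬝ᵥ X = 1 ∧ Y ⬝ᵥ Y = 1 ∧ X ⬝ᵥ Y = 0 ∧ k = sectCurv A X Y},
      (A.trace ^ 2 - (A * A).trace) / 2 - A.trace ^ 2 / 4 ≤ k := by
    rintro k ⟨X, Y, hX, hY, hXY, rfl⟩
    have hX' : X 0 * X 0 + X 1 * X 1 + X 2 * X 2 = 1 := by
      simpa [dotProduct, Fin.sum_univ_three] using hX
    have hY' : Y 0 * Y 0 + Y 1 * Y 1 + Y 2 * Y 2 = 1 := by
      simpa [dotProduct, Fin.sum_univ_three] using hY
    have hXY' : X 0 * Y 0 + X 1 * Y 1 + X 2 * Y 2 = 0 := by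
      simpa [dotProduct, Fin.sum_univ_three] using hXY
    set Z : Fin 3 → ℝ := ![X 1 * Y 2 - X 2 * Y 1, X 2 * Y 0 - X 0 * Y 2, X 0 * Y 1 - X 1 * Y 0]
      with hZ
    set P : Matrix (Fin 3) (Fin 3) ℝ := Matrix.of ![X, Y, Z] with hP
    have hPPt : P * Pᵀ = 1 := by
      ext i j
      rw [Matrix.mul_apply]
      simp only [Matrix.transpose_apply, Fin.sum_univ_three]
      fin_cases i <;> fin_cases j <;>
        simp [hP, hZ, Matrix.one_apply, Matrix.cons_val_zero, Matrix.cons_val_one,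
          Matrix.head_cons, Matrix.cons_val_two, Matrix.tail_cons]
      · exact hX'
      · exact hXY'
      · ring
      · linear_combination hXY'
      · exact hY'
      · ring
      · ring
      · ring
      · linear_combination (Y 0 * Y 0 + Y 1 * Y 1 + Y 2 * Y 2) * hX' + hY'
          - (X 0 * Y 0 + X 1 * Y 1 + X 2 * Y 2) * hXY'
    have hPtP : Pᵀ * P = 1 := mul_eq_one_comm.mp hPPt
    have hcancel : ∀ C : Matrix (Fin 3) (Fin 3) ℝ, Pᵀ * (P * C) = C := by
      intro C; rw [← Matrix.mul_assoc, hPtP, Matrix.one_mul]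
    set B : Matrix (Fin 3) (Fin 3) ℝ := P * A * Pᵀ with hB
    have hBsymm : B.IsSymm := by
      unfold Matrix.IsSymm
      rw [hB, Matrix.transpose_mul, Matrix.transpose_mul, Matrix.transpose_transpose,
        hA.eq, Matrix.mul_assoc]
    have htr : B.trace = A.trace := by
      rw [hB, Matrix.trace_mul_comm, ← Matrix.mul_assoc, hPtP, Matrix.one_mul]
    have htr2 : (B * B).trace = (A * A).trace := by
      have hBB : B * B = P * (A * A) * Pᵀ := by
        rw [hB]
        simp only [Matrix.mul_assoc, hcancel]
      rw [hBB, Matrix.trace_mul_comm, ← Matrix.mul_assoc, hPtP, Matrix.one_mul]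
    -- identify the entries of B relevant to sectCurv A X Y
    have e00 : B 0 0 = A.mulVec X ⬝ᵥ X := by
      rw [hB]
      simp only [Matrix.mul_apply, Matrix.transpose_apply, Matrix.mulVec,
        dotProduct, Fin.sum_univ_three]
      simp [hP]
      ring
    have e11 : B 1 1 = A.mulVec Y ⬝ᵥ Y := by
      rw [hB]
      simp only [Matrix.mul_apply, Matrix.transpose_apply, Matrix.mulVec,
        dotProduct, Fin.sum_univ_three]
      simp [hP]
      ring
    have e01 : B 0 1 = A.mulVec X ⬝ᵥ Y := by
      rw [hB]
      simp only [Matrix.mul_apply, Matrix.transpose_apply, Matrix.mulVec,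
        dotProduct, Fin.sum_univ_three]
      simp [hP]
      rw [ha10, ha20, ha21]; ring
    have hKey := sigma2_eq B hBsymm
    rw [htr, htr2] at hKey
    have htrB : B 0 0 + B 1 1 + B 2 2 = A.trace := by
      rw [← htr, Matrix.trace_fin_three]
    simp only [sectCurv, ← e00, ← e11, ← e01]
    -- abstract the entries of B and the traces as scalars
    clear_value B
    clear hB hP hZ hPPt hPtP hcancel e00 e11 e01 htr htr2 hX hY hXY hX' hY' hXY' hτ hne
    set b00 := B 0 0 with hb00
    set b11 := B 1 1 with hb11
    set b22 := B 2 2 with hb22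
    set b01 := B 0 1 with hb01
    set b02 := B 0 2 with hb02
    set b12 := B 1 2 with hb12
    set t := A.trace with ht
    set q := (A * A).trace with hq
    clear hb00 hb11 hb22 hb01 hb02 hb12 ht hq
    have key2 : b00 * b22 + b11 * b22 - b02 ^ 2 - b12 ^ 2 ≤ t ^ 2 / 4 := by
      rw [← htrB]
      nlinarith [sq_nonneg (b00 + b11 - b22), sq_nonneg b02, sq_nonneg b12]
    linarith [hKey, key2]
  have h1 := le_csInf hne hlb
  have h2 : (9 / 4 : ℝ) * (A.trace / 3) ^ 2 = A.trace ^ 2 / 4 := by ring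
  rw [hτ, h2]
  linarith
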